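/- arXiv:1606.04374 — 2 statements merged into one kernel-verified Lean document; each statement's English description precedes it below -/
import Mathlib

section
/- There are no elements x, y, z of the field ℚ_3 of 3-adic numbers with (x, y, z) ≠ (0, 0, 0) such that 3x^3 + 8y^3 + 21z^3 = 0. -/
/-!
Scaling a nonzero solution over `ℚ_[3]` by the inverse of a coordinate of largest norm gives a
solution over `ℤ_[3]` with a unit coordinate. But checking all residues modulo `27` shows that
every solution of `3x³ + 8y³ + 21z³ = 0` in `ℤ_[3]` has all three coordinates divisible by `3`.
-/

section DiagonalForm

variable {ι R S : Type*} [Fintype ι] [CommRing R] [CommRing S]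

def diagonalForm (a : ι → ℤ) (n : ℕ) (x : ι → R) : R :=
  ∑ i, (a i : R) * x i ^ n

lemma map_diagonalForm (f : R →+* S) (a : ι → ℤ) (n : ℕ) (x : ι → R) :
    f (diagonalForm a n x) = diagonalForm a n (f ∘ x) := by
  simp [diagonalForm]

lemma diagonalForm_smul (a : ι → ℤ) (n : ℕ) (c : R) (x : ι → R) :
    diagonalForm a n (c • x) = c ^ n * diagonalForm a n x := by
  simp only [diagonalForm, Pi.smul_apply, smul_eq_mul, Finset.mul_sum]
  exact Finset.sum_congr rfl fun i _ ↦ by ring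

end DiagonalForm

section Padic

variable {p : ℕ} [Fact p.Prime]

lemma PadicInt.dvd_of_dvd_toZModPow {k : ℕ} (hk : k ≠ 0) {x : ℤ_[p]}
    (h : (p : ZMod (p ^ k)) ∣ toZModPow k x) : (p : ℤ_[p]) ∣ x := by
  obtain ⟨W, hW⟩ := h
  have hker : x - p * (W.val : ℤ_[p]) ∈ RingHom.ker (toZModPow k : ℤ_[p] →+* ZMod (p ^ k)) := by
    rw [RingHom.mem_ker, map_sub, map_mul, map_natCast, map_natCast, ZMod.natCast_val,
      ZMod.cast_id, hW, sub_self]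
  rw [ker_toZModPow, Ideal.mem_span_singleton] at hker
  exact (dvd_sub_left (dvd_mul_right _ _)).mp ((dvd_pow_self _ hk).trans hker)

lemma Padic.exists_primitive_smul_eq {ι : Type*} [Finite ι] {x : ι → ℚ_[p]} (hx : x ≠ 0) :
    ∃ c : ℚ_[p], c ≠ 0 ∧ ∃ w : ι → ℤ_[p], (∃ i, ‖w i‖ = 1) ∧ ∀ i, (w i : ℚ_[p]) = c * x i := by
  obtain ⟨j, hj⟩ := Function.ne_iff.mp hx
  have : Nonempty ι := ⟨j⟩
  obtain ⟨i₀, hmax⟩ := Finite.exists_max (‖x ·‖)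
  have hi₀ : x i₀ ≠ 0 := norm_pos_iff.mp ((norm_pos_iff.mpr hj).trans_le (hmax j))
  have hle : ∀ i, ‖(x i₀)⁻¹ * x i‖ ≤ 1 := fun i ↦ by
    rw [norm_mul, norm_inv, inv_mul_le_one₀ (norm_pos_iff.mpr hi₀)]
    exact hmax i
  refine ⟨(x i₀)⁻¹, inv_ne_zero hi₀, fun i ↦ ⟨_, hle i⟩, ⟨i₀, ?_⟩, fun i ↦ rfl⟩
  simp [inv_mul_cancel₀ hi₀]

theorem Padic.eq_zero_of_diagonalForm_eq_zero {ι : Type*} [Fintype ι] {a : ι → ℤ} {n : ℕ}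
    (ha : ∀ w : ι → ℤ_[p], diagonalForm a n w = 0 → ∀ i, ‖w i‖ < 1) {x : ι → ℚ_[p]}
    (hx : diagonalForm a n x = 0) : x = 0 := by
  by_contra hx0
  obtain ⟨c, -, w, ⟨i, hi⟩, hw⟩ := exists_primitive_smul_eq hx0
  have hw0 : diagonalForm a n w = 0 := by
    rw [← PadicInt.coe_eq_zero]
    change PadicInt.Coe.ringHom _ = _
    rw [map_diagonalForm, show PadicInt.Coe.ringHom ∘ w = c • x from funext hw,
      diagonalForm_smul, hx, mul_zero]
  exact (ha w hw0 i).ne hi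

end Padic

lemma ZMod.three_dvd_of_cubic_3_8_21_eq_zero :
    ∀ X Y Z : ZMod 27, 3 * X ^ 3 + 8 * Y ^ 3 + 21 * Z ^ 3 = 0 → 3 ∣ X ∧ 3 ∣ Y ∧ 3 ∣ Z := by
  decide

lemma PadicInt.norm_lt_one_of_diagonalForm_3_8_21 (w : Fin 3 → ℤ_[3])
    (hw : diagonalForm ![3, 8, 21] 3 w = 0) (i : Fin 3) : ‖w i‖ < 1 := by
  have h27 := congrArg (toZModPow 3) hw
  rw [map_diagonalForm, map_zero] at h27
  simp only [diagonalForm, Function.comp_apply, Fin.sum_univ_three, Matrix.cons_val_zero,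
    Matrix.cons_val_one, Matrix.cons_val, Int.cast_ofNat] at h27
  obtain ⟨h0, h1, h2⟩ := ZMod.three_dvd_of_cubic_3_8_21_eq_zero _ _ _ h27
  rw [norm_lt_one_iff_dvd]
  fin_cases i
  exacts [dvd_of_dvd_toZModPow three_ne_zero h0, dvd_of_dvd_toZModPow three_ne_zero h1,
    dvd_of_dvd_toZModPow three_ne_zero h2]

theorem no_Q3_points_3_8_21 :
    ¬ ∃ x y z : ℚ_[3], (x, y, z) ≠ (0, 0, 0) ∧
      3 * x ^ 3 + 8 * y ^ 3 + 21 * z ^ 3 = 0 := by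
  rintro ⟨x, y, z, hne, heq⟩
  have h0 : ![x, y, z] = 0 :=
    Padic.eq_zero_of_diagonalForm_eq_zero (a := ![3, 8, 21]) (n := 3)
      PadicInt.norm_lt_one_of_diagonalForm_3_8_21
      (by simpa [diagonalForm, Fin.sum_univ_three] using heq)
  apply hne
  simpa using h0
end

section
/- There are no elements x, y, z of the field ℚ_7 of 7-adic numbers with (x, y, z) ≠ (0, 0, 0) such that 3x^3 + 8y^3 + 21z^3 = 0. -/
/-!
Cubes modulo 7 are 0 and ±1, so reducing a 7-adic integral solution modulo 7 forces
7 ∣ x and 7 ∣ y; dividing the equation by 7 then leaves 49·(3x'³ + 8y'³) + 3z³ = 0,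
which forces 7 ∣ z. Hence no integral solution has a unit coordinate. But every nonzero
solution over ℚ₇, divided by a coordinate of maximal norm, becomes such a solution.
-/

instance : Fact (Nat.Prime 7) := ⟨by norm_num⟩

namespace PadicInt

variable {p : ℕ} [Fact p.Prime]

@[simp, norm_cast]
theorem coe_ofNat (n : ℕ) [n.AtLeastTwo] : ((ofNat(n) : ℤ_[p]) : ℚ_[p]) = ofNat(n) := rfl

theorem toZMod_eq_zero_iff_norm_lt_one {x : ℤ_[p]} : toZMod x = 0 ↔ ‖x‖ < 1 := by
  rw [← RingHom.mem_ker, ker_toZMod, IsLocalRing.mem_maximalIdeal, mem_nonunits]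

end PadicInt

theorem exists_mem_ne_zero_forall_norm_div_le_one {K : Type*} [NormedDivisionRing K]
    (s : Finset K) (hs : ∃ x ∈ s, x ≠ 0) : ∃ c ∈ s, c ≠ 0 ∧ ∀ x ∈ s, ‖x / c‖ ≤ 1 := by
  obtain ⟨x, hx, hx0⟩ := hs
  obtain ⟨c, hc, hmax⟩ := s.exists_max_image norm ⟨x, hx⟩
  have hc0 : c ≠ 0 := by
    rintro rfl
    exact hx0 (norm_le_zero_iff.1 (by simpa using hmax x hx))
  refine ⟨c, hc, hc0, fun y hy => ?_⟩
  rw [norm_div]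
  exact div_le_one_of_le₀ (hmax y hy) (norm_nonneg c)

theorem eq_zero_of_cubic_eq_zero_zmod7 {a b c : ZMod 7}
    (h : 3 * a ^ 3 + 8 * b ^ 3 + 21 * c ^ 3 = 0) : a = 0 ∧ b = 0 := by
  revert a b c; decide

theorem eq_zero_of_cubic_div_seven_eq_zero_zmod7 {a b c : ZMod 7}
    (h : 49 * (3 * a ^ 3 + 8 * b ^ 3) + 3 * c ^ 3 = 0) : c = 0 := by
  revert a b c; decide

namespace PadicInt

theorem norm_lt_one_of_cubic_eq_zero {X Y Z : ℤ_[7]}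
    (h : 3 * X ^ 3 + 8 * Y ^ 3 + 21 * Z ^ 3 = 0) : ‖X‖ < 1 ∧ ‖Y‖ < 1 ∧ ‖Z‖ < 1 := by
  have h_mod := congrArg toZMod h
  simp only [map_add, map_mul, map_pow, map_ofNat, map_zero] at h_mod
  obtain ⟨hX, hY⟩ := eq_zero_of_cubic_eq_zero_zmod7 h_mod
  rw [toZMod_eq_zero_iff_norm_lt_one] at hX hY
  refine ⟨hX, hY, ?_⟩
  obtain ⟨X, rfl⟩ := (norm_lt_one_iff_dvd _).1 hX
  obtain ⟨Y, rfl⟩ := (norm_lt_one_iff_dvd _).1 hY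
  have h_div : 49 * (3 * X ^ 3 + 8 * Y ^ 3) + 3 * Z ^ 3 = 0 :=
    mul_left_cancel₀ (by norm_num : ((7 : ℕ) : ℤ_[7]) ≠ 0) (by linear_combination h)
  have h_div_mod := congrArg toZMod h_div
  simp only [map_add, map_mul, map_pow, map_ofNat, map_zero] at h_div_mod
  exact toZMod_eq_zero_iff_norm_lt_one.1 (eq_zero_of_cubic_div_seven_eq_zero_zmod7 h_div_mod)

end PadicInt

theorem Padic.norm_lt_one_of_cubic_eq_zero {x y z : ℚ_[7]} (hx : ‖x‖ ≤ 1) (hy : ‖y‖ ≤ 1)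
    (hz : ‖z‖ ≤ 1) (h : 3 * x ^ 3 + 8 * y ^ 3 + 21 * z ^ 3 = 0) :
    ‖x‖ < 1 ∧ ‖y‖ < 1 ∧ ‖z‖ < 1 :=
  PadicInt.norm_lt_one_of_cubic_eq_zero (X := ⟨x, hx⟩) (Y := ⟨y, hy⟩) (Z := ⟨z, hz⟩)
    (Subtype.ext (by exact_mod_cast h))

theorem no_Q7_points_3_8_21 :
    ¬ ∃ x y z : ℚ_[7], (x, y, z) ≠ (0, 0, 0) ∧
      3 * x ^ 3 + 8 * y ^ 3 + 21 * z ^ 3 = 0 := by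
  classical
  rintro ⟨x, y, z, hne, h⟩
  have hs : ∃ w ∈ ({x, y, z} : Finset ℚ_[7]), w ≠ 0 := by
    by_contra! h0
    simp_all
  obtain ⟨c, hc, hc0, h_int⟩ := exists_mem_ne_zero_forall_norm_div_le_one _ hs
  have h_scaled : 3 * (x / c) ^ 3 + 8 * (y / c) ^ 3 + 21 * (z / c) ^ 3 = 0 := by
    field_simp
    linear_combination h
  obtain ⟨hx, hy, hz⟩ := Padic.norm_lt_one_of_cubic_eq_zero (h_int x (by simp))
    (h_int y (by simp)) (h_int z (by simp)) h_scaled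
  have hcc : ‖c / c‖ < 1 := by
    simp only [Finset.mem_insert, Finset.mem_singleton] at hc
    rcases hc with rfl | rfl | rfl <;> assumption
  simp [div_self hc0] at hcc
end
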